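/- arXiv:1411.6301 — 7 statements merged into one kernel-verified Lean document; each statement's English description precedes it below -/
import Mathlib

section
/- Let N ≥ 1 be a natural number and let z, y be complex numbers with z^N = 1, y^N = 1 and z ≠ y. Then |z + y| ≤ 2·cos(π/N). -/
/-! Dividing by `y` reduces the claim to `‖1 + w‖ ≤ 2 cos (π / N)` for an `N`-th root of unity
`w = exp (2πik/N) ≠ 1`, so `0 < k < N`. Since `1 + exp (iθ) = exp (iθ/2) · 2 cos (θ/2)`, this is
`|cos (πk/N)| ≤ cos (π/N)`, which holds because `πk/N` lies in `[π/N, π - π/N]`. -/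

open Real Complex

lemma Real.abs_cos_le_cos_of_le_of_le_pi_sub {a x : ℝ} (ha : 0 ≤ a) (hax : a ≤ x)
    (hxa : x ≤ π - a) : |Real.cos x| ≤ Real.cos a := by
  rw [abs_le]
  constructor
  · have := Real.cos_le_cos_of_nonneg_of_le_pi (by linarith) (by linarith) hxa
    rw [Real.cos_pi_sub] at this
    linarith
  · exact Real.cos_le_cos_of_nonneg_of_le_pi ha (by linarith) hax

lemma Complex.norm_one_add_exp_ofReal_mul_I (θ : ℝ) :
    ‖1 + exp (θ * I)‖ = 2 * |Real.cos (θ / 2)| := by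
  have hfactor : 1 + exp (θ * I) = exp ((θ / 2 : ℝ) * I) * (2 * Real.cos (θ / 2) : ℝ) := by
    push_cast
    rw [two_cos, mul_add, ← exp_add, ← exp_add]
    ring_nf
    simp [add_comm]
  rw [hfactor, norm_mul, norm_exp_ofReal_mul_I, one_mul, norm_real, Real.norm_eq_abs, abs_mul,
    abs_two]

lemma Complex.norm_one_add_le_of_pow_eq_one {N : ℕ} [NeZero N] {w : ℂ} (hw : w ^ N = 1)
    (hw1 : w ≠ 1) : ‖1 + w‖ ≤ 2 * Real.cos (π / N) := by
  obtain ⟨k, hkN, rfl⟩ := (isPrimitiveRoot_exp N (NeZero.ne N)).eq_pow_of_pow_eq_one hw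
  have hk : k ≠ 0 := by rintro rfl; exact hw1 (pow_zero _)
  have hNpos : (0 : ℝ) < N := by exact_mod_cast Nat.pos_of_ne_zero (NeZero.ne N)
  have hk1 : (1 : ℝ) ≤ k := by exact_mod_cast Nat.one_le_iff_ne_zero.mpr hk
  have hk_succ_le : (k : ℝ) + 1 ≤ N := by exact_mod_cast hkN
  have hexp : exp (2 * π * I / N) ^ k = exp ((2 * (π * k / N) : ℝ) * I) := by
    rw [← exp_nat_mul]
    push_cast
    ring_nf
  rw [hexp, norm_one_add_exp_ofReal_mul_I, mul_div_cancel_left₀ _ two_ne_zero]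
  gcongr
  apply Real.abs_cos_le_cos_of_le_of_le_pi_sub (by positivity)
  · gcongr
    exact le_mul_of_one_le_right pi_pos.le hk1
  · rw [le_sub_iff_add_le, ← add_div, div_le_iff₀ hNpos]
    nlinarith [pi_pos]

/-- If `z` and `y` are distinct `N`-th roots of unity (`N ≥ 1`), then
`|z + y| ≤ 2 cos (π / N)`. -/
theorem roots_of_unity_sum_abs_le (N : ℕ) (hN : 1 ≤ N) (z y : ℂ)
    (hz : z ^ N = 1) (hy : y ^ N = 1) (hne : z ≠ y) :
    ‖z + y‖ ≤ 2 * Real.cos (Real.pi / N) := by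
  have hN0 : N ≠ 0 := Nat.one_le_iff_ne_zero.mp hN
  have : NeZero N := ⟨hN0⟩
  have hy0 : y ≠ 0 := by rintro rfl; simp [hN0] at hy
  have hsum : z + y = y * (1 + z / y) := by field_simp; ring
  rw [hsum, norm_mul, norm_eq_one_of_pow_eq_one hy hN0, one_mul]
  refine norm_one_add_le_of_pow_eq_one (by rw [div_pow, hz, hy, div_one]) ?_
  rwa [Ne, div_eq_one_iff_eq hy0]
end

section
/- Let H be a finite abelian group (written multiplicatively) and let c : ℕ → H → ℝ satisfy: c_j(g) ≥ 0 for all j, g; Σ_{g∈H} c_j(g) = 1 for all j; and c_j(g) ≤ c_j(1) for all j and g (the mass at the identity is maximal). Then the following are equivalent: (i) for every character α : H → ℂ with α ≠ 1 and every j₀, the partial products ∏_{j=j₀}^{j₀+d} (Σ_{g∈H} c_j(g)·α(g⁻¹)) tend to 0 in ℂ as d → ∞; (ii) for every character α ≠ 1, the series Σ_j (Σ_{g : α(g) ≠ 1} c_j(g)) of nonnegative reals diverges (the function of j is not summable); (iii) for every maximal proper subgroup K of H, the series Σ_j (Σ_{g ∉ K} c_j(g)) diverges; (iv) for all characters α ≠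 β of H, the series Σ_j (Σ_{(g,h) ∈ H×H : α(g·h⁻¹) ≠ β(g·h⁻¹)} c_j(g)·c_j(h)) diverges. -/
/-!
Write `ĉ_j(α) = ∑ g, c_j(g) α(g⁻¹)`, `M_j(L)` for the mass of `c_j` outside a subgroup `L` and
`P_j(L)` for the mass of `c_j ⊗ c_j` on pairs with `g h⁻¹ ∉ L`. Characters take values on the
unit circle, so `1 - |ĉ_j(α)|² = ∑_{g,h} c_j(g) c_j(h) (1 - Re α(g h⁻¹)) ≥ δ_α P_j(ker α)`; hence
divergence of `∑ P_j` forces every tail product of the `ĉ_j(α)` to `0`. Conversely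
`|1 - ĉ_j(α)| ≤ 2 M_j(ker α)`, and a product whose factors are summably close to `1` has tails
bounded away from `0`. The maximality of `c_j(1)` gives `c_j(1) ≥ 1/|H|`, hence
`M_j(L) ≤ |H| P_j(L)`; for `α ≠ β` the pair condition in (iv) is `g h⁻¹ ∉ ker (α β⁻¹)`. Finally
(ii) ⇔ (iii) because `M_j` is antitone in `L` and every proper subgroup lies both in a maximal
one and in the kernel of a nontrivial character.
-/

open Filter Finset

theorem Finset.prod_Icc_add_eq_prod_range {M : Type*} [CommMonoid M] (f : ℕ → M) (a d : ℕ) :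
    ∏ j ∈ Icc a (a + d), f j = ∏ i ∈ range (d + 1), f (a + i) := by
  rw [← Finset.Ico_add_one_right_eq_Icc, prod_Ico_eq_prod_range, add_assoc,
    Nat.add_sub_cancel_left]

section Products

variable {R : Type*} [SeminormedCommRing R] [NormMulClass R] [NormOneClass R]

theorem one_sub_sum_norm_one_sub_le_norm_prod {ι : Type*} (s : Finset ι) (f : ι → R) :
    1 - ∑ i ∈ s, ‖1 - f i‖ ≤ ‖∏ i ∈ s, f i‖ := by
  classical
  induction s using Finset.cons_induction with
  | empty => simp
  | cons a s ha ih =>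
    rw [prod_cons, sum_cons, norm_mul]
    have hfa : 1 - ‖1 - f a‖ ≤ ‖f a‖ := by
      simpa using norm_sub_norm_le (1 : R) (1 - f a)
    have hS := sum_nonneg fun i (_ : i ∈ s) => norm_nonneg (1 - f i)
    rcases le_total ‖1 - f a‖ 1 with ht | ht
    · nlinarith [mul_le_mul_of_nonneg_right hfa (norm_nonneg (∏ i ∈ s, f i)),
        mul_le_mul_of_nonneg_left ih (sub_nonneg.2 ht), mul_nonneg (norm_nonneg (1 - f a)) hS]
    · nlinarith [mul_nonneg (norm_nonneg (f a)) (norm_nonneg (∏ i ∈ s, f i))]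

theorem exists_not_tendsto_prod_Icc_zero {a : ℕ → R} (ha : Summable fun j => ‖1 - a j‖) :
    ∃ j₀, ¬ Tendsto (fun d => ∏ j ∈ Icc j₀ (j₀ + d), a j) atTop (nhds 0) := by
  obtain ⟨s, hs⟩ := summable_iff_vanishing.1 ha (Set.Iio (1 / 2)) (Iio_mem_nhds one_half_pos)
  obtain ⟨j₀, hj₀⟩ := s.exists_nat_subset_range
  refine ⟨j₀, fun h => ?_⟩
  have hsmall : ∀ d, ∑ j ∈ Icc j₀ (j₀ + d), ‖1 - a j‖ < 1 / 2 := fun d =>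
    hs _ (disjoint_of_subset_right hj₀ (by simp +contextual [disjoint_left]))
  obtain ⟨d, hd⟩ := ((tendsto_zero_iff_norm_tendsto_zero.1 h).eventually_lt_const
    one_half_pos).exists
  linarith [hsmall d, one_sub_sum_norm_one_sub_le_norm_prod (Icc j₀ (j₀ + d)) a]

theorem tendsto_prod_Icc_zero_of_norm_le_exp {a : ℕ → R} {m : ℕ → ℝ} (hm : ∀ j, 0 ≤ m j)
    (hdiv : ¬ Summable m) (ha : ∀ j, ‖a j‖ ≤ Real.exp (-m j)) (j₀ : ℕ) :
    Tendsto (fun d => ∏ j ∈ Icc j₀ (j₀ + d), a j) atTop (nhds 0) := by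
  have hsum : Tendsto (fun d => ∑ i ∈ range (d + 1), m (j₀ + i)) atTop atTop := by
    refine ((not_summable_iff_tendsto_nat_atTop_of_nonneg fun i => hm _).1 ?_).comp
      (tendsto_add_atTop_nat 1)
    simpa only [add_comm j₀] using (summable_nat_add_iff j₀).not.2 hdiv
  refine squeeze_zero_norm (fun d => ?_)
    (Real.tendsto_exp_atBot.comp (tendsto_neg_atTop_atBot.comp hsum))
  rw [prod_Icc_add_eq_prod_range, norm_prod]
  calc ∏ i ∈ range (d + 1), ‖a (j₀ + i)‖ ≤ ∏ i ∈ range (d + 1), Real.exp (-m (j₀ + i)) :=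
        prod_le_prod (fun _ _ => norm_nonneg _) fun _ _ => ha _
    _ = Real.exp (-∑ i ∈ range (d + 1), m (j₀ + i)) := by
        rw [← Real.exp_sum, sum_neg_distrib]

end Products

theorem Complex.re_lt_one_of_norm_eq_one {z : ℂ} (hz : ‖z‖ = 1) (h1 : z ≠ 1) : z.re < 1 := by
  refine (hz ▸ z.re_le_norm).lt_of_ne fun hre => h1 ?_
  exact Complex.ext hre (Complex.nonneg_iff.1 (Complex.re_eq_norm.1 (hre.trans hz.symm))).2.symm

section Characters

variable {G : Type*} [Group G] [Finite G]

theorem MonoidHom.norm_apply_of_finite (α : G →* ℂ) (x : G) : ‖α x‖ = 1 :=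
  (α.isOfFinOrder (isOfFinOrder_of_finite x)).norm_eq_one

theorem MonoidHom.exists_pos_le_one_sub_re (α : G →* ℂ) :
    ∃ δ > 0, ∀ x, α x ≠ 1 → δ ≤ 1 - (α x).re := by
  classical
  have : Nonempty G := ⟨1⟩
  obtain ⟨x₀, hx₀⟩ := Finite.exists_min fun x => if α x = 1 then 1 else 1 - (α x).re
  refine ⟨_, ?_, fun x hx => (hx₀ x).trans_eq (if_neg hx)⟩
  split_ifs with h
  · exact one_pos
  · exact sub_pos.2 (Complex.re_lt_one_of_norm_eq_one (α.norm_apply_of_finite x₀) h)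

end Characters

theorem MonoidHom.mul_comp_inv_apply_eq_one_iff {G M : Type*} [CommGroup G] [CommGroupWithZero M]
    (α β : G →* M) (x : G) :
    (α * β.comp invMonoidHom) x = 1 ↔ α x = β x := by
  have hβ : β x ≠ 0 := fun h => by simpa [h] using map_mul_eq_one β (mul_inv_cancel x)
  simp [map_inv, mul_inv_eq_one₀ hβ]

theorem MonoidHom.mul_comp_inv_eq_one_iff {G M : Type*} [CommGroup G] [CommGroupWithZero M]
    (α β : G →* M) : α * β.comp invMonoidHom = 1 ↔ α = β := by
  simp only [MonoidHom.ext_iff, MonoidHom.one_apply, mul_comp_inv_apply_eq_one_iff]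

theorem Subgroup.exists_ne_one_le_ker {G : Type*} [CommGroup G] [Finite G] (K : Subgroup G)
    (hK : K ≠ ⊤) :
    ∃ α : G →* ℂ, α ≠ 1 ∧ K ≤ α.ker := by
  obtain ⟨a, ha⟩ : ∃ a, a ∉ K := by simpa [Subgroup.eq_top_iff'] using hK
  have : NeZero (Monoid.exponent (G ⧸ K)) := ⟨Monoid.exponent_ne_zero_of_finite⟩
  obtain ⟨φ, hφ⟩ := CommGroup.exists_apply_ne_one_of_hasEnoughRootsOfUnity (G ⧸ K) ℂ
    (a := QuotientGroup.mk a) (by simpa [QuotientGroup.eq_one_iff] using ha)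
  refine ⟨(Units.coeHom ℂ).comp (φ.comp (QuotientGroup.mk' K)), fun h => hφ ?_, fun g hg => ?_⟩
  · exact Units.ext (by simpa using DFunLike.congr_fun h a)
  · simp [(QuotientGroup.eq_one_iff g).2 hg]

section Mass

open scoped Classical

variable {G : Type*} [Group G] [Fintype G]

noncomputable def massOutside (c : G → ℝ) (L : Subgroup G) : ℝ :=
  ∑ g, if g ∈ L then 0 else c g

noncomputable def pairMassOutside (c : G → ℝ) (L : Subgroup G) : ℝ :=
  ∑ g, ∑ h, if g * h⁻¹ ∈ L then 0 else c g * c h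

def charCoeff (c : G → ℝ) (α : G →* ℂ) : ℂ :=
  ∑ g, (c g : ℂ) * α g⁻¹

variable {c : G → ℝ}

theorem massOutside_nonneg (hc : 0 ≤ c) (L : Subgroup G) : 0 ≤ massOutside c L :=
  sum_nonneg fun g _ => by split_ifs; exacts [le_rfl, hc g]

theorem pairMassOutside_nonneg (hc : 0 ≤ c) (L : Subgroup G) : 0 ≤ pairMassOutside c L :=
  sum_nonneg fun g _ => sum_nonneg fun h _ => by
    split_ifs; exacts [le_rfl, mul_nonneg (hc g) (hc h)]

theorem massOutside_anti (hc : 0 ≤ c) {K L : Subgroup G} (hKL : K ≤ L) :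
    massOutside c L ≤ massOutside c K :=
  sum_le_sum fun g _ => by
    by_cases hL : g ∈ L
    · simp only [hL, if_true]; split_ifs; exacts [le_rfl, hc g]
    · simp [hL, mt (@hKL g) hL]

theorem massOutside_ker (α : G →* ℂ) :
    massOutside c α.ker = ∑ g, if α g ≠ 1 then c g else 0 :=
  sum_congr rfl fun g _ => by by_cases h : α g = 1 <;> simp [h]

theorem mul_massOutside_le_pairMassOutside (hc : 0 ≤ c) (L : Subgroup G) :
    c 1 * massOutside c L ≤ pairMassOutside c L := by
  rw [massOutside, mul_sum]
  refine sum_le_sum fun g _ => le_trans ?_ (single_le_sum (f := fun h =>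
    if g * h⁻¹ ∈ L then 0 else c g * c h) (fun h _ => ?_) (mem_univ 1))
  · split_ifs <;> simp_all [mul_comm]
  · split_ifs; exacts [le_rfl, mul_nonneg (hc g) (hc h)]

theorem massOutside_le_card_mul_pairMassOutside (hc : 0 ≤ c) (hsum : ∑ g, c g = 1)
    (hmax : ∀ g, c g ≤ c 1) (L : Subgroup G) :
    massOutside c L ≤ Fintype.card G * pairMassOutside c L := by
  have hc1 : 1 ≤ Fintype.card G * c 1 := by
    simpa [hsum] using sum_le_sum fun g (_ : g ∈ univ) => hmax g
  calc massOutside c L ≤ Fintype.card G * c 1 * massOutside c L :=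
        le_mul_of_one_le_left (massOutside_nonneg hc L) hc1
    _ ≤ Fintype.card G * pairMassOutside c L := by
        rw [mul_assoc]
        exact mul_le_mul_of_nonneg_left (mul_massOutside_le_pairMassOutside hc L) (by positivity)

end Mass

open scoped Classical in
theorem pairMassOutside_ker_mul_comp_inv {G : Type*} [CommGroup G] [Fintype G] (c : G → ℝ)
    (α β : G →* ℂ) :
    pairMassOutside c (α * β.comp invMonoidHom).ker =
      ∑ g, ∑ h, if α (g * h⁻¹) ≠ β (g * h⁻¹) then c g * c h else 0 :=
  sum_congr rfl fun g _ => sum_congr rfl fun h _ => by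
    simp only [MonoidHom.mem_ker, MonoidHom.mul_comp_inv_apply_eq_one_iff]
    by_cases hgh : α (g * h⁻¹) = β (g * h⁻¹) <;> simp [hgh]

section CharCoeff

variable {G : Type*} [Group G] [Fintype G] {c : G → ℝ}

theorem norm_one_sub_charCoeff_le (hc : 0 ≤ c) (hsum : ∑ g, c g = 1) (α : G →* ℂ) :
    ‖1 - charCoeff c α‖ ≤ 2 * massOutside c α.ker := by
  have h1 : 1 - charCoeff c α = ∑ g, (c g : ℂ) * (1 - α g⁻¹) := by
    simp only [charCoeff, mul_sub, mul_one, sum_sub_distrib, ← Complex.ofReal_sum, hsum,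
      Complex.ofReal_one]
  rw [h1, massOutside, mul_sum]
  refine (norm_sum_le _ _).trans (sum_le_sum fun g _ => ?_)
  rw [norm_mul, Complex.norm_real, Real.norm_of_nonneg (hc g)]
  by_cases hg : g ∈ α.ker
  · simp [(MonoidHom.mem_ker).1 hg, hg]
  · have : ‖1 - α g⁻¹‖ ≤ 2 := (norm_sub_le _ _).trans (by simp [α.norm_apply_of_finite]; norm_num)
    simp only [hg, if_false]
    nlinarith [mul_le_mul_of_nonneg_left this (hc g)]

theorem normSq_charCoeff (α : G →* ℂ) :
    (Complex.normSq (charCoeff c α) : ℂ) = ∑ g, ∑ h, ((c g * c h : ℝ) : ℂ) * α (g * h⁻¹) := by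
  have hconj : ∀ g, (starRingEnd ℂ) (α g⁻¹) = α g := fun g => by
    rw [map_inv, Complex.inv_eq_conj (α.norm_apply_of_finite g), Complex.conj_conj]
  rw [Complex.normSq_eq_conj_mul_self, charCoeff, map_sum, sum_mul_sum]
  simp only [map_mul, Complex.conj_ofReal, hconj, Complex.ofReal_mul]
  exact sum_congr rfl fun g _ => sum_congr rfl fun h _ => by ring

theorem one_sub_normSq_charCoeff (hsum : ∑ g, c g = 1) (α : G →* ℂ) :
    1 - Complex.normSq (charCoeff c α) = ∑ g, ∑ h, c g * c h * (1 - (α (g * h⁻¹)).re) := by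
  have hre := congrArg Complex.re (normSq_charCoeff (c := c) α)
  simp only [Complex.ofReal_re, Complex.re_sum, Complex.re_ofReal_mul] at hre
  simp only [hre, mul_sub, mul_one, sum_sub_distrib, ← mul_sum, hsum]

theorem normSq_charCoeff_le (hc : 0 ≤ c) (hsum : ∑ g, c g = 1) {α : G →* ℂ} {δ : ℝ}
    (hδ : ∀ x, α x ≠ 1 → δ ≤ 1 - (α x).re) :
    Complex.normSq (charCoeff c α) ≤ 1 - δ * pairMassOutside c α.ker := by
  rw [le_sub_comm, one_sub_normSq_charCoeff hsum, pairMassOutside, mul_sum]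
  refine sum_le_sum fun g _ => ?_
  rw [mul_sum]
  refine sum_le_sum fun h _ => ?_
  by_cases hgh : α (g * h⁻¹) = 1
  · simp [hgh]
  · simp only [MonoidHom.mem_ker, hgh, if_false]
    nlinarith [hδ _ hgh, mul_nonneg (hc g) (hc h)]

theorem norm_charCoeff_le_exp (hc : 0 ≤ c) (hsum : ∑ g, c g = 1) {α : G →* ℂ} {δ : ℝ}
    (hδ : ∀ x, α x ≠ 1 → δ ≤ 1 - (α x).re) :
    ‖charCoeff c α‖ ≤ Real.exp (-(δ / 2 * pairMassOutside c α.ker)) := by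
  refine (pow_le_pow_iff_left₀ (norm_nonneg _) (Real.exp_pos _).le two_ne_zero).1 ?_
  rw [Complex.sq_norm, ← Real.exp_nat_mul]
  calc Complex.normSq (charCoeff c α) ≤ 1 - δ * pairMassOutside c α.ker :=
        normSq_charCoeff_le hc hsum hδ
    _ ≤ _ := by
        convert Real.add_one_le_exp (-(δ * pairMassOutside c α.ker)) using 1 <;> ring_nf

end CharCoeff

section Sequences

variable {G : Type*} [Group G] [Fintype G] {c : ℕ → G → ℝ}

theorem tendsto_prod_charCoeff_zero (hc : ∀ j, 0 ≤ c j) (hsum : ∀ j, ∑ g, c j g = 1)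
    {α : G →* ℂ} (hdiv : ¬ Summable fun j => pairMassOutside (c j) α.ker) (j₀ : ℕ) :
    Tendsto (fun d => ∏ j ∈ Icc j₀ (j₀ + d), charCoeff (c j) α) atTop (nhds 0) := by
  obtain ⟨δ, hδ, hδα⟩ := α.exists_pos_le_one_sub_re
  exact tendsto_prod_Icc_zero_of_norm_le_exp
    (fun j => mul_nonneg (by positivity) (pairMassOutside_nonneg (hc j) _))
    ((summable_mul_left_iff (by positivity)).not.2 hdiv)
    (fun j => norm_charCoeff_le_exp (hc j) (hsum j) hδα) j₀

theorem not_summable_massOutside_ker (hc : ∀ j, 0 ≤ c j) (hsum : ∀ j, ∑ g, c j g = 1)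
    {α : G →* ℂ}
    (h : ∀ j₀, Tendsto (fun d => ∏ j ∈ Icc j₀ (j₀ + d), charCoeff (c j) α) atTop (nhds 0)) :
    ¬ Summable fun j => massOutside (c j) α.ker := fun hsumm => by
  obtain ⟨j₀, hj₀⟩ := exists_not_tendsto_prod_Icc_zero (Summable.of_nonneg_of_le
    (fun j => norm_nonneg _) (fun j => norm_one_sub_charCoeff_le (hc j) (hsum j) α)
    (hsumm.mul_left 2))
  exact hj₀ (h j₀)

theorem not_summable_pairMassOutside (hc : ∀ j, 0 ≤ c j) (hsum : ∀ j, ∑ g, c j g = 1)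
    (hmax : ∀ j g, c j g ≤ c j 1) {L : Subgroup G}
    (h : ¬ Summable fun j => massOutside (c j) L) :
    ¬ Summable fun j => pairMassOutside (c j) L := fun hsumm =>
  h <| (hsumm.mul_left (Fintype.card G : ℝ)).of_nonneg_of_le (fun j => massOutside_nonneg (hc j) _)
    fun j => massOutside_le_card_mul_pairMassOutside (hc j) (hsum j) (hmax j) _

end Sequences

theorem forall_not_summable_massOutside_ker_iff {G : Type*} [CommGroup G] [Fintype G]
    {c : ℕ → G → ℝ} (hc : ∀ j, 0 ≤ c j) :
    (∀ α : G →* ℂ, α ≠ 1 → ¬ Summable fun j => massOutside (c j) α.ker) ↔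
      ∀ K : Subgroup G, IsCoatom K → ¬ Summable fun j => massOutside (c j) K := by
  refine ⟨fun h K hK hsumm => ?_, fun h α hα hsumm => ?_⟩
  · obtain ⟨α, hα, hKα⟩ := K.exists_ne_one_le_ker hK.1
    exact h α hα (hsumm.of_nonneg_of_le (fun j => massOutside_nonneg (hc j) _)
      fun j => massOutside_anti (hc j) hKα)
  · obtain ⟨K, hK, hαK⟩ :=
      (eq_top_or_exists_le_coatom α.ker).resolve_left (mt MonoidHom.ker_eq_top_iff.1 hα)
    exact h K hK (hsumm.of_nonneg_of_le (fun j => massOutside_nonneg (hc j) _)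
      fun j => massOutside_anti (hc j) hαK)

open scoped Classical in
/-- Lemma 1.1 (weak ergodicity criterion) for hemicirculant matrices over a finite
abelian group `H`, stated at the level of the coefficient functions `c j : H → ℝ`. -/
theorem weak_ergodicity_criterion {H : Type} [CommGroup H] [Fintype H]
    (c : ℕ → H → ℝ)
    (hpos : ∀ j g, 0 ≤ c j g)
    (hsum : ∀ j, ∑ g, c j g = 1)
    (hmax : ∀ j g, c j g ≤ c j 1) :
    List.TFAE
      [ -- (i)
        (∀ α : H →* ℂ, α ≠ 1 → ∀ j₀ : ℕ,
          Tendsto (fun d => ∏ j ∈ Finset.Icc j₀ (j₀ + d), ∑ g, (c j g : ℂ) * α g⁻¹)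
            atTop (nhds 0)),
        -- (ii)
        (∀ α : H →* ℂ, α ≠ 1 →
          ¬ Summable (fun j => ∑ g, if α g ≠ 1 then c j g else 0)),
        -- (iii)
        (∀ K : Subgroup H, IsCoatom K →
          ¬ Summable (fun j => ∑ g, if g ∈ K then 0 else c j g)),
        -- (iv)
        (∀ α β : H →* ℂ, α ≠ β →
          ¬ Summable (fun j => ∑ g, ∑ h,
            if α (g * h⁻¹) ≠ β (g * h⁻¹) then c j g * c j h else 0)) ] := by
  have hc : ∀ j, 0 ≤ c j := hpos
  tfae_have 4 → 1 := fun h4 α hα => by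
    have hdiv := h4 α 1 hα
    simp only [← pairMassOutside_ker_mul_comp_inv, MonoidHom.one_comp, mul_one] at hdiv
    exact tendsto_prod_charCoeff_zero hc hsum hdiv
  tfae_have 1 → 2 := fun h1 α hα => by
    simpa only [massOutside_ker] using not_summable_massOutside_ker hc hsum (h1 α hα)
  tfae_have 2 ↔ 3 := by
    have h23 := forall_not_summable_massOutside_ker_iff hc
    simp only [massOutside_ker] at h23
    exact h23
  tfae_have 2 → 4 := fun h2 α β hαβ => by
    have hdiv := h2 _ (mt (α.mul_comp_inv_eq_one_iff β).1 hαβ)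
    simp only [← massOutside_ker] at hdiv
    simp only [← pairMassOutside_ker_mul_comp_inv]
    exact not_summable_pairMassOutside hc hsum hmax hdiv
  tfae_finish
end

section
/- Let H be a finite abelian group (written multiplicatively) with exponent N (the least N ≥ 1 with g^N = 1 for all g ∈ H), and let q : H → ℝ[x,x⁻¹] be a family of Laurent polynomials with nonnegative coefficients such that Σ_{g∈H} q_g(1) = 1. Let α ≠ β be two characters of H, and set S_{α,β} := {(g,h) ∈ H×H : α(g·h⁻¹) ≠ β(g·h⁻¹)}. Then ‖p_α · p_β‖₁ ≤ 1 − (1 − cos(π/N)) · Σ_{(g,h) ∈ S_{α,β}} q_g(1)·q_h(1). -/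
open Finsupp

/-- The coefficients of a real Laurent polynomial, i.e. of an element of the
monoid algebra `ℝ[ℤ]`, as a finitely supported function `ℤ →₀ ℝ`. -/
def lcoeff (p : AddMonoidAlgebra ℝ ℤ) : ℤ →₀ ℝ := p.coeff

/-- The coefficients of a complex Laurent polynomial. -/
def lcoeffC (p : AddMonoidAlgebra ℂ ℤ) : ℤ →₀ ℂ := p.coeff

/-- The `l¹` norm of a complex Laurent polynomial: the sum of the absolute values of
its coefficients. -/
noncomputable def l1C (p : AddMonoidAlgebra ℂ ℤ) : ℝ := (lcoeffC p).sum fun _ c => ‖c‖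

/-- Evaluation of a real Laurent polynomial at `x = 1`: the sum of its coefficients. -/
noncomputable def ev1 (p : AddMonoidAlgebra ℝ ℤ) : ℝ := (lcoeff p).sum fun _ c => c

/-- A real Laurent polynomial viewed as a complex Laurent polynomial. -/
noncomputable def toC (p : AddMonoidAlgebra ℝ ℤ) : AddMonoidAlgebra ℂ ℤ :=
  AddMonoidAlgebra.ofCoeff (Finsupp.mapRange (fun r : ℝ => (r : ℂ)) Complex.ofReal_zero (lcoeff p))

/-!
Since the `q_g` commute, symmetrizing the double sum gives
`p_α p_β = ∑_{g,h} d(g,h) q_g q_h` with `d(g,h) = (α(g⁻¹)β(h⁻¹) + α(h⁻¹)β(g⁻¹)) / 2`, so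
`‖p_α p_β‖₁ ≤ ∑_{g,h} |d(g,h)| q_g(1) q_h(1)` by the triangle inequality and
`‖q_g q_h‖₁ ≤ ‖q_g‖₁ ‖q_h‖₁ = q_g(1) q_h(1)`. The two summands of `d(g,h)` are `N`-th roots of
unity, distinct exactly when `(g,h) ∈ S_{α,β}`, and two distinct `N`-th roots of unity are at
angle at least `2π/N`, so their sum has modulus at most `2 cos(π/N)`. Hence `|d(g,h)|` is at most
`cos(π/N)` on `S_{α,β}` and at most `1` elsewhere, and the total mass is `(∑ q_g(1))² = 1`.
-/

lemma l1C_eq_sum_of_support_subset {p : AddMonoidAlgebra ℂ ℤ} {s : Finset ℤ}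
    (h : (lcoeffC p).support ⊆ s) : l1C p = ∑ m ∈ s, ‖lcoeffC p m‖ :=
  Finsupp.sum_of_support_subset _ h _ fun _ _ => norm_zero

@[simp]
lemma l1C_zero : l1C 0 = 0 := by simp [l1C, lcoeffC]

lemma l1C_single (m : ℤ) (c : ℂ) : l1C (AddMonoidAlgebra.single m c) = ‖c‖ := by
  rw [l1C, lcoeffC, AddMonoidAlgebra.coeff_single, Finsupp.sum_single_index (by exact norm_zero)]

lemma l1C_add_le (p q : AddMonoidAlgebra ℂ ℤ) : l1C (p + q) ≤ l1C p + l1C q := by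
  classical
  set s := (lcoeffC p).support ∪ (lcoeffC q).support
  rw [l1C_eq_sum_of_support_subset (p := p + q) (s := s) (by exact Finsupp.support_add),
    l1C_eq_sum_of_support_subset Finset.subset_union_left,
    l1C_eq_sum_of_support_subset Finset.subset_union_right, ← Finset.sum_add_distrib]
  exact Finset.sum_le_sum fun m _ => norm_add_le _ _

lemma l1C_sum_le {ι : Type*} (s : Finset ι) (p : ι → AddMonoidAlgebra ℂ ℤ) :
    l1C (∑ i ∈ s, p i) ≤ ∑ i ∈ s, l1C (p i) :=
  Finset.le_sum_of_subadditive l1C l1C_zero.le l1C_add_le s p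

lemma l1C_smul (c : ℂ) (p : AddMonoidAlgebra ℂ ℤ) : l1C (c • p) = ‖c‖ * l1C p := by
  rw [l1C_eq_sum_of_support_subset (p := c • p) (by exact Finsupp.support_smul),
    l1C_eq_sum_of_support_subset subset_rfl, Finset.mul_sum]
  exact Finset.sum_congr rfl fun m _ => norm_smul c (lcoeffC p m)

lemma l1C_sum_smul_le {ι : Type*} (s : Finset ι) (c : ι → ℂ) (p : ι → AddMonoidAlgebra ℂ ℤ) :
    l1C (∑ i ∈ s, c i • p i) ≤ ∑ i ∈ s, ‖c i‖ * l1C (p i) := by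
  simpa only [l1C_smul] using l1C_sum_le s fun i => c i • p i

lemma l1C_mul_le (p q : AddMonoidAlgebra ℂ ℤ) : l1C (p * q) ≤ l1C p * l1C q := by
  calc l1C (p * q)
      = l1C (∑ a ∈ (lcoeffC p).support, ∑ b ∈ (lcoeffC q).support,
          AddMonoidAlgebra.single (a + b) (lcoeffC p a * lcoeffC q b)) := by
        rw [AddMonoidAlgebra.mul_def]; rfl
    _ ≤ ∑ a ∈ (lcoeffC p).support, ∑ b ∈ (lcoeffC q).support,
          l1C (AddMonoidAlgebra.single (a + b) (lcoeffC p a * lcoeffC q b)) :=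
        (l1C_sum_le _ _).trans (Finset.sum_le_sum fun a _ => l1C_sum_le _ _)
    _ = l1C p * l1C q := by
        simp only [l1C_single, norm_mul]
        rw [l1C, l1C, Finsupp.sum, Finsupp.sum, Finset.sum_mul_sum]

lemma toC_eq_mapRingHom (p : AddMonoidAlgebra ℝ ℤ) :
    toC p = AddMonoidAlgebra.mapRingHom ℤ Complex.ofRealHom p := by
  ext m
  simp [toC, lcoeff]

lemma toC_mul (p q : AddMonoidAlgebra ℝ ℤ) : toC (p * q) = toC p * toC q := by
  simp only [toC_eq_mapRingHom, map_mul]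

lemma ev1_nonneg {p : AddMonoidAlgebra ℝ ℤ} (hp : ∀ m, 0 ≤ lcoeff p m) : 0 ≤ ev1 p :=
  Finset.sum_nonneg fun m _ => hp m

lemma l1C_toC_of_nonneg {p : AddMonoidAlgebra ℝ ℤ} (hp : ∀ m, 0 ≤ lcoeff p m) :
    l1C (toC p) = ev1 p := by
  rw [l1C_eq_sum_of_support_subset (p := toC p)
    (by exact Finsupp.support_mapRange (hf := Complex.ofReal_zero)), ev1, Finsupp.sum]
  exact Finset.sum_congr rfl fun m _ => by
    simp [lcoeffC, toC, Real.norm_of_nonneg (hp m)]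

lemma l1C_toC_mul_le {p q : AddMonoidAlgebra ℝ ℤ} (hp : ∀ m, 0 ≤ lcoeff p m)
    (hq : ∀ m, 0 ≤ lcoeff q m) : l1C (toC p * toC q) ≤ ev1 p * ev1 q := by
  simpa only [l1C_toC_of_nonneg hp, l1C_toC_of_nonneg hq] using l1C_mul_le (toC p) (toC q)

namespace Complex

lemma two_pi_div_le_abs_arg_of_pow_eq_one {N : ℕ} (hN : N ≠ 0) {z : ℂ} (hz : z ^ N = 1)
    (hz1 : z ≠ 1) : 2 * Real.pi / N ≤ |arg z| := by
  have hexp : exp (arg z * I) = z := by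
    simpa [norm_eq_one_of_pow_eq_one hz hN] using norm_mul_exp_arg_mul_I z
  obtain ⟨n, hn⟩ := exp_eq_one_iff.mp
    (show exp (N * (arg z * I)) = 1 by rw [exp_nat_mul, hexp, hz])
  have hn' : N * arg z = n * (2 * Real.pi) := by simpa using congrArg im hn
  have hn0 : n ≠ 0 := by
    rintro rfl
    apply hz1
    rw [← hexp, show arg z = 0 by simpa [hN] using hn']
    simp
  have hN' : (0 : ℝ) < N := by positivity
  have habs : |(N : ℝ) * arg z| = |(n : ℝ)| * (2 * Real.pi) := by
    rw [hn', abs_mul, abs_of_pos (by positivity : 0 < 2 * Real.pi)]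
  rw [abs_mul, Nat.abs_cast] at habs
  rw [div_le_iff₀ hN', mul_comm |arg z|, habs]
  exact le_mul_of_one_le_left (by positivity) (by exact_mod_cast Int.one_le_abs hn0)

lemma norm_one_add_le_two_cos_of_pow_eq_one {N : ℕ} (hN : N ≠ 0) {z : ℂ}
    (hz : z ^ N = 1) (hz1 : z ≠ 1) : ‖1 + z‖ ≤ 2 * Real.cos (Real.pi / N) := by
  have hnorm : ‖z‖ = 1 := norm_eq_one_of_pow_eq_one hz hN
  have harg := two_pi_div_le_abs_arg_of_pow_eq_one hN hz hz1
  have hsq : ‖1 + z‖ ^ 2 = 2 + 2 * Real.cos (arg z) := by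
    rw [cos_arg (norm_ne_zero_iff.mp (by simp [hnorm])), hnorm, div_one, Complex.sq_norm,
      normSq_apply]
    have : z.re * z.re + z.im * z.im = 1 := by
      rw [← normSq_apply, ← Complex.sq_norm, hnorm, one_pow]
    simp only [add_re, one_re, add_im, one_im]
    linear_combination this
  have hcos : Real.cos (arg z) ≤ 2 * Real.cos (Real.pi / N) ^ 2 - 1 := by
    rw [← Real.cos_abs, ← Real.cos_two_mul, ← mul_div_assoc]
    exact Real.cos_le_cos_of_nonneg_of_le_pi (by positivity) (abs_arg_le_pi z) harg
  have hcos_nonneg : 0 ≤ Real.cos (Real.pi / N) := by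
    have : 0 ≤ Real.pi / N := by positivity
    refine Real.cos_nonneg_of_neg_pi_div_two_le_of_le (by linarith [Real.pi_pos]) ?_
    linarith [abs_arg_le_pi z, show 2 * Real.pi / N = 2 * (Real.pi / N) by ring]
  refine (pow_le_pow_iff_left₀ (norm_nonneg _) (by positivity) two_ne_zero).mp ?_
  nlinarith

lemma norm_add_le_two_cos_of_pow_eq_one {N : ℕ} (hN : N ≠ 0) {u v : ℂ} (hu : u ^ N = 1)
    (hv : v ^ N = 1) (huv : u ≠ v) : ‖u + v‖ ≤ 2 * Real.cos (Real.pi / N) := by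
  have hv1 : ‖v‖ = 1 := norm_eq_one_of_pow_eq_one hv hN
  have hv0 : v ≠ 0 := norm_ne_zero_iff.mp (by simp [hv1])
  have key := norm_one_add_le_two_cos_of_pow_eq_one (z := u / v) hN
    (by rw [div_pow, hu, hv, div_one]) ((div_eq_one_iff_eq hv0).not.mpr huv)
  rwa [← one_mul ‖1 + u / v‖, ← hv1, ← norm_mul, mul_add, mul_one, mul_div_cancel₀ _ hv0,
    add_comm] at key

end Complex

lemma Finset.sum_sum_smul_eq_sum_sum_half_add_smul {ι 𝕜 M : Type*} [Fintype ι]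
    [DivisionSemiring 𝕜] [NeZero (2 : 𝕜)] [AddCommMonoid M] [Module 𝕜 M] (c : ι → ι → 𝕜)
    {T : ι → ι → M} (hT : ∀ i j, T i j = T j i) :
    ∑ i, ∑ j, c i j • T i j = ∑ i, ∑ j, ((c i j + c j i) / 2) • T i j := by
  have hswap : ∑ i, ∑ j, (c j i / 2) • T i j = ∑ i, ∑ j, (c i j / 2) • T i j := by
    rw [Finset.sum_comm]
    simp only [hT]
  calc ∑ i, ∑ j, c i j • T i j = ∑ i, ∑ j, (c i j / 2 + c i j / 2) • T i j := by
        simp only [add_halves]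
    _ = ∑ i, ∑ j, (c i j / 2) • T i j + ∑ i, ∑ j, (c j i / 2) • T i j := by
        rw [hswap]; simp only [add_smul, Finset.sum_add_distrib]
    _ = ∑ i, ∑ j, ((c i j + c j i) / 2) • T i j := by
        simp only [add_div, add_smul, Finset.sum_add_distrib]

lemma Finset.sum_smul_mul_sum_smul_eq_sum_sum_half_add_smul {ι 𝕜 A : Type*} [Fintype ι]
    [Semifield 𝕜] [NeZero (2 : 𝕜)] [CommSemiring A] [Algebra 𝕜 A] (a b : ι → 𝕜) (x : ι → A) :
    (∑ i, a i • x i) * (∑ j, b j • x j) =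
      ∑ i, ∑ j, ((a i * b j + a j * b i) / 2) • (x i * x j) := by
  rw [Finset.sum_mul_sum, ← Finset.sum_sum_smul_eq_sum_sum_half_add_smul _ fun _ _ => mul_comm _ _]
  simp only [smul_mul_smul_comm]

section Characters

variable {G : Type*} [Group G]

lemma MonoidHom.map_pow_exponent {M : Type*} [Monoid M] (χ : G →* M) (g : G) :
    χ g ^ Monoid.exponent G = 1 := by
  rw [← map_pow, Monoid.pow_exponent_eq_one, map_one]

lemma MonoidHom.map_mul_map_pow_exponent {M : Type*} [CommMonoid M] (α β : G →* M) (a b : G) :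
    (α a * β b) ^ Monoid.exponent G = 1 := by
  rw [mul_pow, α.map_pow_exponent, β.map_pow_exponent, one_mul]

lemma MonoidHom.map_inv_mul_map_inv_ne {α β : G →* ℂ} {g h : G}
    (hne : α (g * h⁻¹) ≠ β (g * h⁻¹)) : α g⁻¹ * β h⁻¹ ≠ α h⁻¹ * β g⁻¹ := by
  have hunit : ∀ (χ : G →* ℂ) (a : G), χ a ≠ 0 := fun χ a => ((Group.isUnit a).map χ).ne_zero
  contrapose! hne
  simp only [map_mul, map_inv] at hne ⊢
  field_simp [hunit α g, hunit α h, hunit β g, hunit β h] at hne ⊢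
  linear_combination -hne

variable [Finite G] (α β : G →* ℂ) (g h : G)

lemma norm_half_add_map_inv_mul_le_one :
    ‖(α g⁻¹ * β h⁻¹ + α h⁻¹ * β g⁻¹) / 2‖ ≤ 1 := by
  have hnorm : ∀ a b : G, ‖α a * β b‖ = 1 := fun a b =>
    Complex.norm_eq_one_of_pow_eq_one (α.map_mul_map_pow_exponent β a b)
      Monoid.exponent_ne_zero_of_finite
  rw [norm_div, Complex.norm_ofNat, div_le_one two_pos]
  linarith [norm_add_le (α g⁻¹ * β h⁻¹) (α h⁻¹ * β g⁻¹), hnorm g⁻¹ h⁻¹, hnorm h⁻¹ g⁻¹]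

lemma norm_half_add_map_inv_mul_le_cos (hne : α (g * h⁻¹) ≠ β (g * h⁻¹)) :
    ‖(α g⁻¹ * β h⁻¹ + α h⁻¹ * β g⁻¹) / 2‖ ≤ Real.cos (Real.pi / Monoid.exponent G) := by
  rw [norm_div, Complex.norm_ofNat, div_le_iff₀' two_pos]
  exact Complex.norm_add_le_two_cos_of_pow_eq_one Monoid.exponent_ne_zero_of_finite
    (α.map_mul_map_pow_exponent β _ _) (α.map_mul_map_pow_exponent β _ _)
    (MonoidHom.map_inv_mul_map_inv_ne hne)

end Characters

open scoped Classical in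
theorem eigenvalue_product_norm_bound_general {H : Type} [CommGroup H] [Fintype H]
    (q : H → AddMonoidAlgebra ℝ ℤ)
    (hpos : ∀ g m, 0 ≤ lcoeff (q g) m)
    (hsum : ∑ g, ev1 (q g) = 1)
    (α β : H →* ℂ) :
    l1C ((∑ g, α g⁻¹ • toC (q g)) * (∑ g, β g⁻¹ • toC (q g))) ≤
      1 - (1 - Real.cos (Real.pi / (Monoid.exponent H))) *
        ∑ g, ∑ h, if α (g * h⁻¹) ≠ β (g * h⁻¹) then ev1 (q g) * ev1 (q h) else 0 := by
  set c := Real.cos (Real.pi / Monoid.exponent H)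
  have hcoeff : ∀ g h, ‖(α g⁻¹ * β h⁻¹ + α h⁻¹ * β g⁻¹) / 2‖ ≤
      if α (g * h⁻¹) ≠ β (g * h⁻¹) then c else 1 := fun g h => by
    split_ifs with hne
    exacts [norm_half_add_map_inv_mul_le_cos α β g h hne, norm_half_add_map_inv_mul_le_one α β g h]
  have hsplit : ∀ (P : Prop) [Decidable P] (w : ℝ),
      (if P then c else 1) * w = w - (1 - c) * if P then w else 0 := by
    intros; split_ifs <;> ring
  rw [Finset.sum_smul_mul_sum_smul_eq_sum_sum_half_add_smul]
  calc _ ≤ ∑ g, ∑ h, ‖(α g⁻¹ * β h⁻¹ + α h⁻¹ * β g⁻¹) / 2‖ * l1C (toC (q g) * toC (q h)) :=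
        (l1C_sum_le _ _).trans (Finset.sum_le_sum fun g _ => l1C_sum_smul_le _ _ _)
    _ ≤ ∑ g, ∑ h, ‖(α g⁻¹ * β h⁻¹ + α h⁻¹ * β g⁻¹) / 2‖ * (ev1 (q g) * ev1 (q h)) := by
        gcongr with g _ h _
        exact l1C_toC_mul_le (hpos g) (hpos h)
    _ ≤ ∑ g, ∑ h, (if α (g * h⁻¹) ≠ β (g * h⁻¹) then c else 1) * (ev1 (q g) * ev1 (q h)) := by
        gcongr with g _ h _
        · exact mul_nonneg (ev1_nonneg (hpos g)) (ev1_nonneg (hpos h))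
        · exact hcoeff g h
    _ = _ := by
        simp only [hsplit, Finset.sum_sub_distrib, ← Finset.mul_sum, ← Finset.sum_mul, hsum,
          one_mul]

open scoped Classical in
/-- The main estimate in the proof of Lemma 1.2: for a family `q : H → ℝ[x,x⁻¹]` of
nonnegative Laurent polynomials with total mass `1`, and distinct characters `α ≠ β`
of the finite abelian group `H` of exponent `N`, the product of the eigenvalue
polynomials `p_α = ∑ g, α(g⁻¹)·q_g` and `p_β` satisfies
`‖p_α p_β‖₁ ≤ 1 - (1 - cos (π/N)) · ∑_{(g,h) ∈ S_{α,β}} q_g(1) q_h(1)`. -/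
theorem eigenvalue_product_norm_bound {H : Type} [CommGroup H] [Fintype H]
    (q : H → AddMonoidAlgebra ℝ ℤ)
    (hpos : ∀ g m, 0 ≤ lcoeff (q g) m)
    (hsum : ∑ g, ev1 (q g) = 1)
    (α β : H →* ℂ) (hαβ : α ≠ β) :
    l1C ((∑ g, α g⁻¹ • toC (q g)) * (∑ g, β g⁻¹ • toC (q g))) ≤
      1 - (1 - Real.cos (Real.pi / (Monoid.exponent H))) *
        ∑ g, ∑ h, if α (g * h⁻¹) ≠ β (g * h⁻¹) then ev1 (q g) * ev1 (q h) else 0 :=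
  eigenvalue_product_norm_bound_general q hpos hsum α β
end

section
/- Let g : ℕ → ℕ with g(j) ≥ 1 for all j, let S ⊆ ℕ, and let e : ℕ → ℕ → ℤ satisfy e(s,i) ∈ {−1, 0, 1} for all s, i, with e(s,i) = 0 unless 1 ≤ i < s. Assume: (i) for every s ∈ S, g(s) = Σ_{i=1}^{s−1} e(s,i)·g(s−i) (as integers) and Σ_{i=1}^{s−1} e(s,i) is even; (ii) setting b(s) := 1 + Σ_{i=1}^{s−1} |e(s,i)|, the series Σ_{s∈S} 2^{−b(s)} diverges; (iii) setting supp(s) := {s} ∪ {s−i : e(s,i) ≠ 0}, the sets supp(s), s ∈ S, are pairwise disjoint. Then for every k ∈ ℕ, 2^{−N}·‖∏_{j=k+1}^{k+N} (1 − x^{g(j)})‖₁ tends to 0 as N → ∞. -/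
open Filter Polynomial

/-- The `l¹` norm of a real polynomial: the sum of the absolute values of its
coefficients. -/
noncomputable def pl1 (p : Polynomial ℝ) : ℝ := ∑ m ∈ p.support, |p.coeff m|

/-!
Cut `[k+1, k+N]` into the supports `supp(s)` of the recurrences that lie inside it and the
remaining indices. As `‖·‖₁` is submultiplicative, the normalized mass
`2^{-N} ‖∏ (1 - x^{g j})‖₁` is at most the product of the normalized masses of the pieces, each
at most `1`. Expanding the product over `supp(s)` as a signed sum over subsets, the subsets
`{s} ∪ {s - i : e(s,i) = -1}` and `{s - i : e(s,i) = 1}` carry the same monomial (by the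
recurrence) with opposite signs (by the parity condition), so this block has mass at most
`1 - 2^{1-b(s)}`. The normalized mass is therefore at most `exp (-∑ 2^{-b(s)})`, the sum running
over the blocks inside `[k+1, k+N]`; by disjointness only finitely many blocks reach below `k+1`,
so this sum diverges as `N → ∞`.
-/

open Finset

lemma pl1_nonneg (p : ℝ[X]) : 0 ≤ pl1 p :=
  sum_nonneg fun _ _ => abs_nonneg _

lemma pl1_eq_sum_of_support_subset {p : ℝ[X]} {t : Finset ℕ} (h : p.support ⊆ t) :
    pl1 p = ∑ m ∈ t, |p.coeff m| :=
  sum_subset h fun m _ hm => by simp [notMem_support_iff.mp hm]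

@[simp]
lemma pl1_monomial (n : ℕ) (a : ℝ) : pl1 (monomial n a) = |a| := by
  rw [pl1_eq_sum_of_support_subset (support_monomial_subset n a)]
  simp

lemma pl1_add_le (p q : ℝ[X]) : pl1 (p + q) ≤ pl1 p + pl1 q := by
  rw [pl1_eq_sum_of_support_subset support_add,
    pl1_eq_sum_of_support_subset (subset_union_left (s₂ := q.support)),
    pl1_eq_sum_of_support_subset (subset_union_right (s₁ := p.support)), ← sum_add_distrib]
  exact sum_le_sum fun m _ => by simpa using abs_add_le (p.coeff m) (q.coeff m)

lemma pl1_sum_le {ι : Type*} (s : Finset ι) (f : ι → ℝ[X]) :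
    pl1 (∑ i ∈ s, f i) ≤ ∑ i ∈ s, pl1 (f i) := by
  classical
  induction s using Finset.induction_on with
  | empty => simp [pl1]
  | insert a s ha ih =>
    rw [sum_insert ha, sum_insert ha]
    exact (pl1_add_le _ _).trans (by linarith)

lemma pl1_mul_le (p q : ℝ[X]) : pl1 (p * q) ≤ pl1 p * pl1 q := by
  have hpq : p * q =
      ∑ m ∈ p.support, ∑ n ∈ q.support, monomial (m + n) (p.coeff m * q.coeff n) := by
    conv_lhs => rw [as_sum_support p, as_sum_support q]
    simp only [sum_mul_sum, monomial_mul_monomial]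
  calc pl1 (p * q) ≤ ∑ m ∈ p.support, ∑ n ∈ q.support, |p.coeff m * q.coeff n| := by
        rw [hpq]
        refine (pl1_sum_le _ _).trans (sum_le_sum fun m _ => ?_)
        exact (pl1_sum_le _ _).trans_eq (by simp only [pl1_monomial])
    _ = pl1 p * pl1 q := by simp only [abs_mul, pl1, sum_mul_sum]

lemma pl1_prod_le {ι : Type*} (s : Finset ι) (f : ι → ℝ[X]) :
    pl1 (∏ i ∈ s, f i) ≤ ∏ i ∈ s, pl1 (f i) := by
  classical
  induction s using Finset.induction_on with
  | empty => simpa using (pl1_monomial 0 1).le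
  | insert a s ha ih =>
    rw [prod_insert ha, prod_insert ha]
    exact (pl1_mul_le _ _).trans (mul_le_mul_of_nonneg_left ih (pl1_nonneg _))

lemma prod_one_sub_X_pow {ι : Type*} [DecidableEq ι] (s : Finset ι) (n : ι → ℕ) :
    ∏ i ∈ s, (1 - X ^ n i : ℝ[X]) =
      ∑ t ∈ s.powerset, monomial (∑ i ∈ t, n i) ((-1) ^ #t) := by
  simp_rw [sub_eq_neg_add]
  rw [prod_add]
  refine sum_congr rfl fun t _ => ?_
  rw [prod_const_one, mul_one, prod_neg, prod_pow_eq_pow_sum, X_pow_eq_monomial,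
    ← mul_one ((-1 : ℝ) ^ #t), ← C_mul_monomial]
  simp

lemma pl1_sum_monomial_neg_one_pow_le {κ : Type*} (G : Finset κ) (m c : κ → ℕ) :
    pl1 (∑ t ∈ G, monomial (m t) ((-1 : ℝ) ^ c t)) ≤ #G :=
  (pl1_sum_le _ _).trans (by simp)

lemma pl1_prod_one_sub_X_pow_le_of_cancel {ι : Type*} [DecidableEq ι] {I T₁ T₂ : Finset ι}
    (n : ι → ℕ) (h₁ : T₁ ⊆ I) (h₂ : T₂ ⊆ I) (hsum : ∑ i ∈ T₁, n i = ∑ i ∈ T₂, n i)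
    (hodd : Odd (#T₁ + #T₂)) :
    pl1 (∏ i ∈ I, (1 - X ^ n i)) ≤ 2 ^ #I - 2 := by
  have hne : T₁ ≠ T₂ := by
    rintro rfl
    exact Nat.not_odd_iff_even.2 (Even.add_self _) hodd
  have hpair : {T₁, T₂} ⊆ I.powerset := by
    simp [insert_subset_iff, h₁, h₂]
  have hsign : (-1 : ℝ) ^ #T₂ = -(-1) ^ #T₁ := by
    rw [← mul_right_inj' (pow_ne_zero #T₁ (neg_ne_zero.2 one_ne_zero)), ← pow_add,
      hodd.neg_one_pow, mul_neg, ← pow_add, Even.neg_one_pow ⟨_, rfl⟩]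
  rw [prod_one_sub_X_pow, ← sum_sdiff hpair, sum_pair hne, hsum, hsign, monomial_neg,
    add_neg_cancel, add_zero]
  have h2 : 2 ≤ 2 ^ #I := by simpa [card_pair hne] using card_le_card hpair
  refine (pl1_sum_monomial_neg_one_pow_le _ _ _).trans_eq ?_
  rw [card_sdiff_of_subset hpair, card_powerset, card_pair hne, Nat.cast_sub h2]
  norm_num

noncomputable def normalizedMass {ι : Type*} (n : ι → ℕ) (J : Finset ι) : ℝ :=
  pl1 (∏ j ∈ J, (1 - X ^ n j)) / 2 ^ #J

section normalizedMass

variable {ι : Type*} (n : ι → ℕ)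

lemma normalizedMass_nonneg (J : Finset ι) : 0 ≤ normalizedMass n J :=
  div_nonneg (pl1_nonneg _) (by positivity)

lemma normalizedMass_le_one [DecidableEq ι] (J : Finset ι) : normalizedMass n J ≤ 1 := by
  rw [normalizedMass, div_le_one (by positivity), prod_one_sub_X_pow]
  simpa using pl1_sum_monomial_neg_one_pow_le J.powerset (fun t => ∑ i ∈ t, n i) card

lemma normalizedMass_le_of_cancel [DecidableEq ι] {I T₁ T₂ : Finset ι} (h₁ : T₁ ⊆ I)
    (h₂ : T₂ ⊆ I) (hsum : ∑ i ∈ T₁, n i = ∑ i ∈ T₂, n i) (hodd : Odd (#T₁ + #T₂)) :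
    normalizedMass n I ≤ 1 - 2 * (2⁻¹) ^ #I := by
  rw [normalizedMass, div_le_iff₀ (by positivity), sub_mul, one_mul, mul_assoc, ← mul_pow,
    inv_mul_cancel₀ two_ne_zero, one_pow, mul_one]
  exact pl1_prod_one_sub_X_pow_le_of_cancel n h₁ h₂ hsum hodd

lemma normalizedMass_union_le [DecidableEq ι] {A B : Finset ι} (h : Disjoint A B) :
    normalizedMass n (A ∪ B) ≤ normalizedMass n A * normalizedMass n B := by
  simp only [normalizedMass]
  rw [prod_union h, card_union_of_disjoint h, pow_add, div_mul_div_comm]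
  exact div_le_div_of_nonneg_right (pl1_mul_le _ _) (by positivity)

lemma normalizedMass_antitone [DecidableEq ι] : Antitone (normalizedMass n) := by
  intro A B h
  calc normalizedMass n B = normalizedMass n (A ∪ (B \ A)) := by rw [union_sdiff_of_subset h]
    _ ≤ normalizedMass n A * normalizedMass n (B \ A) := normalizedMass_union_le n disjoint_sdiff
    _ ≤ normalizedMass n A := mul_le_of_le_one_right (normalizedMass_nonneg n A)
        (normalizedMass_le_one n _)

lemma normalizedMass_biUnion_le {κ : Type*} [DecidableEq ι] {Q : Finset κ} {B : κ → Finset ι}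
    (h : (Q : Set κ).PairwiseDisjoint B) :
    normalizedMass n (Q.biUnion B) ≤ ∏ q ∈ Q, normalizedMass n (B q) := by
  simp only [normalizedMass]
  rw [prod_biUnion h, card_biUnion h, ← prod_pow_eq_pow_sum, prod_div_distrib]
  exact div_le_div_of_nonneg_right (pl1_prod_le _ _) (by positivity)

lemma normalizedMass_image {κ : Type*} [DecidableEq ι] {f : κ → ι} {J : Finset κ}
    (hf : Set.InjOn f J) : normalizedMass n (J.image f) = normalizedMass (n ∘ f) J := by
  rw [normalizedMass, normalizedMass, prod_image hf, card_image_of_injOn hf]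
  rfl

end normalizedMass

lemma tendsto_sum_Icc_atTop_of_not_summable {f : ℕ → ℝ} (hf : ∀ i, 0 ≤ f i)
    (h : ¬Summable f) (k : ℕ) :
    Tendsto (fun N => ∑ i ∈ Icc (k + 1) (k + N), f i) atTop atTop := by
  have hshift : ∀ N, ∑ i ∈ Icc (k + 1) (k + N), f i = ∑ i ∈ range N, f (i + (k + 1)) := by
    intro N
    rw [← Ico_add_one_right_eq_Icc, sum_Ico_eq_sum_range, add_right_comm,
      Nat.add_sub_cancel_left]
    exact sum_congr rfl fun i _ => by rw [add_comm]
  simp only [hshift]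
  exact (not_summable_iff_tendsto_nat_atTop_of_nonneg fun i => hf _).1
    (by rwa [summable_nat_add_iff])

lemma not_summable_indicator_sep_lt {α : Type*} {S : Set α} {B : α → Set ℕ} {w : α → ℝ}
    (hB : S.PairwiseDisjoint B) (hdiv : ¬Summable (S.indicator w)) (k : ℕ) :
    ¬Summable ({s ∈ S | ∀ j ∈ B s, k < j}.indicator w) := by
  set S' := {s ∈ S | ∀ j ∈ B s, k < j}
  have hfin : (S \ S').Finite := by
    have hmeet := (hB.mono fun s => Set.inter_subset_left (t := Set.Iic k)).finite_biUnion_iff.1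
      ((Set.finite_Iic k).subset (Set.iUnion₂_subset fun _ _ => Set.inter_subset_right))
    refine hmeet.2.subset fun s ⟨hs, hs'⟩ => ⟨hs, ?_⟩
    simpa [S', hs, Set.Nonempty] using hs'
  intro h
  rw [← Set.union_sdiff_cancel (Set.sep_subset S _), Set.indicator_union_of_disjoint
    Set.disjoint_sdiff_right] at hdiv
  exact hdiv (h.add (summable_of_hasFiniteSupport (hfin.subset Set.support_indicator_subset)))

lemma tendsto_normalizedMass_Icc_of_blocks (n : ℕ → ℕ) {S : Set ℕ} {B : ℕ → Finset ℕ}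
    {w : ℕ → ℝ} {k : ℕ} (hB : S.PairwiseDisjoint fun s => (B s : Set ℕ))
    (hBIoc : ∀ s ∈ S, B s ⊆ Ioc k s) (hmass : ∀ s ∈ S, normalizedMass n (B s) ≤ 1 - w s)
    (hw : ∀ s, 0 ≤ w s) (hdiv : ¬Summable (S.indicator w)) :
    Tendsto (fun N => normalizedMass n (Icc (k + 1) (k + N))) atTop (nhds 0) := by
  classical
  have hbound : ∀ N, normalizedMass n (Icc (k + 1) (k + N)) ≤
      Real.exp (-∑ s ∈ Icc (k + 1) (k + N), S.indicator w s) := by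
    intro N
    set Q := {s ∈ Icc (k + 1) (k + N) | s ∈ S}
    have hQS : ∀ s ∈ Q, s ∈ S := fun s hs => (mem_filter.1 hs).2
    have hcover : Q.biUnion B ⊆ Icc (k + 1) (k + N) := by
      refine biUnion_subset.2 fun s hs j hj => ?_
      have hj := mem_Ioc.1 (hBIoc s (hQS s hs) hj)
      have hs := mem_Icc.1 (mem_filter.1 hs).1
      exact mem_Icc.2 ⟨hj.1, hj.2.trans hs.2⟩
    calc normalizedMass n (Icc (k + 1) (k + N)) ≤ normalizedMass n (Q.biUnion B) :=
          normalizedMass_antitone n hcover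
      _ ≤ ∏ s ∈ Q, normalizedMass n (B s) :=
          normalizedMass_biUnion_le n fun s hs t ht hst =>
            disjoint_coe.1 (hB (hQS s hs) (hQS t ht) hst)
      _ ≤ ∏ s ∈ Q, Real.exp (-w s) :=
          prod_le_prod (fun s _ => normalizedMass_nonneg n _)
            fun s hs => (hmass s (hQS s hs)).trans (Real.one_sub_le_exp_neg _)
      _ = Real.exp (-∑ s ∈ Icc (k + 1) (k + N), S.indicator w s) := by
          rw [← Real.exp_sum, sum_neg_distrib, sum_filter]
          simp only [Set.indicator_apply]
  have hsum := tendsto_sum_Icc_atTop_of_not_summable (Set.indicator_nonneg fun s _ => hw s) hdiv k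
  exact squeeze_zero (fun N => normalizedMass_nonneg n _) hbound
    (Real.tendsto_exp_atBot.comp (tendsto_neg_atTop_atBot.comp hsum))

section signs

variable {ι : Type*} {s : Finset ι} {c : ι → ℤ}

lemma sum_mul_eq_sub_of_sign (hc : ∀ i, c i = -1 ∨ c i = 0 ∨ c i = 1) (a : ι → ℤ) :
    ∑ i ∈ s, c i * a i = ∑ i ∈ s with c i = 1, a i - ∑ i ∈ s with c i = -1, a i := by
  rw [sum_filter, sum_filter, ← sum_sub_distrib]
  refine sum_congr rfl fun i _ => ?_
  rcases hc i with h | h | h <;> simp [h]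

lemma sum_natAbs_eq_card_of_sign (hc : ∀ i, c i = -1 ∨ c i = 0 ∨ c i = 1) :
    ∑ i ∈ s, (c i).natAbs = #{i ∈ s | c i ≠ 0} := by
  rw [card_filter]
  refine sum_congr rfl fun i _ => ?_
  rcases hc i with h | h | h <;> simp [h]

end signs

def recOffsets (c : ℕ → ℤ) (s : ℕ) : Finset ℕ := insert 0 {i ∈ Ico 1 s | c i ≠ 0}

/-- The paper's `supp(s) = {s} ∪ {s - i : e(s,i) ≠ 0}` for `c = e s`, with
the offsets `i` restricted to `[1, s)` as in the recurrence. -/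
def recSupport (c : ℕ → ℤ) (s : ℕ) : Finset ℕ := (recOffsets c s).image (s - ·)

section recurrence

variable {c : ℕ → ℤ} {s : ℕ}

lemma card_recOffsets (hc : ∀ i, c i = -1 ∨ c i = 0 ∨ c i = 1) :
    #(recOffsets c s) = 1 + ∑ i ∈ Ico 1 s, (c i).natAbs := by
  rw [recOffsets, card_insert_of_notMem (by simp), sum_natAbs_eq_card_of_sign hc, add_comm]

lemma normalizedMass_recOffsets_le (g : ℕ → ℕ) (hc : ∀ i, c i = -1 ∨ c i = 0 ∨ c i = 1)
    (hrec : (g s : ℤ) = ∑ i ∈ Ico 1 s, c i * (g (s - i) : ℤ))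
    (hpar : Even (∑ i ∈ Ico 1 s, c i)) :
    normalizedMass (fun i => g (s - i)) (recOffsets c s) ≤
      1 - 2 * (2⁻¹) ^ #(recOffsets c s) := by
  set P := {i ∈ Ico 1 s | c i = 1}
  set M := {i ∈ Ico 1 s | c i = -1}
  have h0M : 0 ∉ M := by simp [M]
  refine normalizedMass_le_of_cancel _ (T₁ := insert 0 M) (T₂ := P) ?_ ?_ ?_ ?_
  · exact insert_subset_insert 0 (monotone_filter_right _ fun i _ (h : c i = -1) => by simp [h])
  · exact (monotone_filter_right _ fun i _ (h : c i = 1) => by simp [h]).trans (subset_insert 0 _)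
  · rw [sum_insert h0M, Nat.sub_zero]
    rw [sum_mul_eq_sub_of_sign hc] at hrec
    exact_mod_cast
      (by linarith : (g s : ℤ) + ∑ i ∈ M, (g (s - i) : ℤ) = ∑ i ∈ P, (g (s - i) : ℤ))
  · have hsum : ∑ i ∈ Ico 1 s, c i = #P - #M := by
      simpa using sum_mul_eq_sub_of_sign (s := Ico 1 s) hc fun _ => 1
    rw [hsum, Int.even_sub] at hpar
    rw [card_insert_of_notMem h0M, add_right_comm, Nat.odd_add_one, Nat.not_odd_iff_even,
      ← Int.even_coe_nat, Nat.cast_add, Int.even_add]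
    exact hpar.symm

lemma normalizedMass_recSupport_le (g : ℕ → ℕ) (hc : ∀ i, c i = -1 ∨ c i = 0 ∨ c i = 1)
    (hrec : (g s : ℤ) = ∑ i ∈ Ico 1 s, c i * (g (s - i) : ℤ))
    (hpar : Even (∑ i ∈ Ico 1 s, c i)) :
    normalizedMass g (recSupport c s) ≤ 1 - (2⁻¹) ^ (1 + ∑ i ∈ Ico 1 s, (c i).natAbs) := by
  have hinj : Set.InjOn (s - ·) (recOffsets c s) := by
    intro i hi j hj (hij : s - i = s - j)
    simp only [recOffsets, coe_insert, coe_filter, mem_Ico, Set.mem_insert_iff,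
      Set.mem_ofPred_eq] at hi hj
    omega
  rw [recSupport, normalizedMass_image g hinj, ← card_recOffsets hc]
  refine (normalizedMass_recOffsets_le g hc hrec hpar).trans (sub_le_sub_left ?_ 1)
  exact le_mul_of_one_le_left (by positivity) one_le_two

lemma coe_recSupport_subset :
    (recSupport c s : Set ℕ) ⊆ {s} ∪ {t | ∃ i, c i ≠ 0 ∧ t = s - i} := by
  intro t ht
  simp only [recSupport, recOffsets, coe_image, coe_insert, coe_filter, Set.image_insert_eq,
    Nat.sub_zero, Set.mem_insert_iff, Set.mem_image, Set.mem_ofPred_eq] at ht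
  rcases ht with rfl | ⟨i, ⟨-, hi⟩, rfl⟩
  · exact Or.inl rfl
  · exact Or.inr ⟨i, hi, rfl⟩

lemma le_of_mem_recSupport {j : ℕ} (hj : j ∈ recSupport c s) : j ≤ s := by
  obtain ⟨i, -, rfl⟩ := mem_image.1 hj
  exact Nat.sub_le s i

end recurrence

theorem even_recurrence_mass_cancellation_general
    (g : ℕ → ℕ) (S : Set ℕ) (e : ℕ → ℕ → ℤ)
    (he1 : ∀ s i, e s i = -1 ∨ e s i = 0 ∨ e s i = 1)
    (hrec : ∀ s ∈ S, (g s : ℤ) = ∑ i ∈ Finset.Ico 1 s, e s i * (g (s - i) : ℤ))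
    (hpar : ∀ s ∈ S, Even (∑ i ∈ Finset.Ico 1 s, e s i))
    (hdiv : ¬ Summable (S.indicator fun s =>
      ((2 : ℝ)⁻¹) ^ (1 + ∑ i ∈ Finset.Ico 1 s, (e s i).natAbs)))
    (hsupp : S.Pairwise (Function.onFun Disjoint
      (fun s => ({s} : Set ℕ) ∪ {t | ∃ i, e s i ≠ 0 ∧ t = s - i}))) :
    ∀ k : ℕ,
      Tendsto (fun N => pl1 (∏ j ∈ Finset.Icc (k + 1) (k + N), (1 - X ^ g j)) / 2 ^ N)
        atTop (nhds 0) := by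
  intro k
  have hdisj : S.PairwiseDisjoint fun s => (recSupport (e s) s : Set ℕ) :=
    Set.PairwiseDisjoint.mono hsupp fun s => coe_recSupport_subset
  have hmass := tendsto_normalizedMass_Icc_of_blocks g
    (S := {s ∈ S | ∀ j ∈ (recSupport (e s) s : Set ℕ), k < j})
    (hdisj.subset (Set.sep_subset S _))
    (fun s hs j hj => mem_Ioc.2 ⟨hs.2 j hj, le_of_mem_recSupport hj⟩)
    (fun s hs => normalizedMass_recSupport_le g (he1 s) (hrec s hs.1) (hpar s hs.1))
    (fun s => by positivity) (not_summable_indicator_sep_lt hdisj hdiv k)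
  simpa [normalizedMass] using hmass

/-- Lemma 2.6: the mass-cancellation (hollowness) lemma. If the exponent sequence `g`
satisfies, on an infinite enough set `S` of indices, recurrence relations
`g s = ∑_{i=1}^{s-1} e s i · g (s-i)` with coefficients `e s i ∈ {−1,0,1}` of even sum,
with `∑_{s ∈ S} 2^{−b(s)} = ∞` for `b(s) = 1 + ∑_i |e s i|`, and with pairwise disjoint
supports `{s} ∪ {s−i : e s i ≠ 0}`, then
`2^{−N}·‖∏_{j=k+1}^{k+N} (1 − x^{g j})‖₁ → 0` as `N → ∞`. -/
theorem even_recurrence_mass_cancellation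
    (g : ℕ → ℕ) (hg : ∀ j, 1 ≤ g j) (S : Set ℕ) (e : ℕ → ℕ → ℤ)
    (he1 : ∀ s i, e s i = -1 ∨ e s i = 0 ∨ e s i = 1)
    (he0 : ∀ s i, e s i ≠ 0 → 1 ≤ i ∧ i < s)
    (hrec : ∀ s ∈ S, (g s : ℤ) = ∑ i ∈ Finset.Ico 1 s, e s i * (g (s - i) : ℤ))
    (hpar : ∀ s ∈ S, Even (∑ i ∈ Finset.Ico 1 s, e s i))
    (hdiv : ¬ Summable (S.indicator fun s =>
      ((2 : ℝ)⁻¹) ^ (1 + ∑ i ∈ Finset.Ico 1 s, (e s i).natAbs)))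
    (hsupp : S.Pairwise (Function.onFun Disjoint
      (fun s => ({s} : Set ℕ) ∪ {t | ∃ i, e s i ≠ 0 ∧ t = s - i}))) :
    ∀ k : ℕ,
      Tendsto (fun N => pl1 (∏ j ∈ Finset.Icc (k + 1) (k + N), (1 - X ^ g j)) / 2 ^ N)
        atTop (nhds 0) :=
  even_recurrence_mass_cancellation_general g S e he1 hrec hpar hdiv hsupp
end

section
/- Fix an integer n ≥ 1 and work in the group algebra A := (ℝ[X])[ℤ/nℤ] (the additive monoid algebra of ℤ/nℤ with coefficients in the polynomial ring ℝ[X]), writing [g] for the canonical basis element of g ∈ ℤ/nℤ. For j ∈ ℕ set u_j := [0] + X^{2^j}·[1] ∈ A. Then for every d ∈ ℕ: ∏_{j=0}^{d} u_j = Σ_{g∈ℤ/nℤ} ( Σ_{a < 2^{d+1}, s₂(a) ≡ g (mod n)} X^a ) · [g], where s₂(a) denotes the sum of the binary digits of a and the congruence means the image of s₂(a) in ℤ/nℤ equals g. -/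
/-!
Multiplying `∏_{j<k} ([0] + X^{2^j}[1]) = ∑_{a<2^k} X^a [s₂(a)]` by the next factor
`[0] + X^{2^k}[1]` gives the terms `X^a [s₂(a)]` and `X^{2^k+a} [s₂(a)+1]`, and
`s₂(2^k + a) = s₂(a) + 1` for `a < 2^k` because the binary digits of `2^k + a` are those of `a`,
padded with zeros, followed by a `1`. The claimed form is this sum grouped by the value of `s₂(a)`
in `ℤ/nℤ`.
-/

open Polynomial Finset

theorem Nat.digits_sum_add_base_pow_mul {b k a m : ℕ} (hb : 1 < b) (ha : a < b ^ k) :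
    (b.digits (a + b ^ k * m)).sum = (b.digits a).sum + (b.digits m).sum := by
  rcases m.eq_zero_or_pos with rfl | hm
  · simp
  obtain ⟨z, rfl⟩ := Nat.exists_eq_add_of_le ((Nat.digits_length_le_iff hb a).2 ha)
  rw [← Nat.digits_append_zeroes_append_digits hb hm]
  simp

namespace AddMonoidAlgebra

variable {R G : Type*}

theorem prod_range_single_zero_one_add_single_pow_two_pow [CommSemiring R] [AddCommMonoid G]
    (g : G) (x : R) (k : ℕ) :
    ∏ j ∈ range k, (single 0 1 + single g (x ^ 2 ^ j))
      = ∑ a ∈ range (2 ^ k), single ((Nat.digits 2 a).sum • g) (x ^ a) := by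
  induction k with
  | zero => simp [one_def]
  | succ k ih =>
    have digits_sum_add_two_pow {a : ℕ} (ha : a < 2 ^ k) :
        (Nat.digits 2 (a + 2 ^ k)).sum = (Nat.digits 2 a).sum + 1 := by
      simpa using Nat.digits_sum_add_base_pow_mul (m := 1) one_lt_two ha
    rw [prod_range_succ, ih, sum_mul, pow_succ, mul_two, sum_range_add, ← sum_add_distrib]
    refine sum_congr rfl fun a ha => ?_
    rw [add_comm (2 ^ k) a, digits_sum_add_two_pow (mem_range.1 ha), mul_add,
      single_mul_single, single_mul_single, add_zero, mul_one, succ_nsmul, pow_add]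

theorem sum_single_eq_sum_single_sum_ite [Semiring R] [Fintype G] [DecidableEq G]
    {ι : Type*} (s : Finset ι) (f : ι → G) (v : ι → R) :
    ∑ a ∈ s, single (f a) (v a) = ∑ g, single g (∑ a ∈ s, if f a = g then v a else 0) := by
  have single_sum (g : G) : single g (∑ a ∈ s, if f a = g then v a else 0)
      = ∑ a ∈ s, if f a = g then single g (v a) else 0 := by
    simp only [← singleAddHom_apply, map_sum, apply_ite, map_zero]
  simp only [single_sum, sum_comm (s := univ), sum_ite_eq, mem_univ, if_true]

end AddMonoidAlgebra

/-- The computation from Section 4: in the group algebra `(ℝ[X])[ℤ/nℤ]`, the product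
`∏_{j=0}^{d} ([0] + X^{2^j}·[1])` equals
`∑_g (∑_{a < 2^{d+1}, s₂(a) ≡ g (mod n)} X^a)·[g]`, where `s₂(a)` is the binary digit
sum of `a`. -/
theorem binary_digit_sum_product (n : ℕ) [NeZero n] (d : ℕ) :
    ∏ j ∈ Finset.range (d + 1),
        (AddMonoidAlgebra.single (0 : ZMod n) (1 : ℝ[X]) +
          AddMonoidAlgebra.single (1 : ZMod n) ((X : ℝ[X]) ^ (2 ^ j)))
      = ∑ g : ZMod n,
          AddMonoidAlgebra.single g
            (∑ a ∈ Finset.range (2 ^ (d + 1)),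
              if ((Nat.digits 2 a).sum : ZMod n) = g then (X : ℝ[X]) ^ a else 0) := by
  rw [AddMonoidAlgebra.prod_range_single_zero_one_add_single_pow_two_pow]
  simp only [nsmul_one]
  exact AddMonoidAlgebra.sum_single_eq_sum_single_sum_ite _ _ _
end

section
/- Let k ≥ 1 be an integer and let a, a' be Laurent polynomials in ℝ[x,x⁻¹] with nonnegative coefficients and a(1) = a'(1) = 1. For i ∈ ℤ/kℤ let A_i (respectively A'_i) denote the sum of the coefficients of a (respectively a') over exponents n ∈ ℤ with n ≡ i (mod k). Suppose there are real numbers η, μ with 1/2 ≤ η ≤ 1 and 1/2 ≤ μ ≤ 1 such that A_i ≤ η and A'_i ≤ μ for all i ∈ ℤ/kℤ. Then the sum of the coefficients of a·a' over exponents not divisible by k is at least η + μ − 2ημ. -/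
/-!
Pushing the exponents forward along `ℤ → ZMod k` is a ring map, so it turns `a`, `a'` into
probability vectors `X ≤ η`, `Y ≤ μ` on `ZMod k` and the mass of `a * a'` on `kℤ` into the
convolution value `∑ᵢ X i * Y (-i)`. In that sum, let `Y (-j)` be the largest entry; every other
entry is at most `m = min (Y (-j)) (1 - Y (-j))`, so the sum is at most
`X j * Y (-j) + (1 - X j) * m ≤ η * Y (-j) + (1 - η) * (1 - Y (-j)) ≤ 1 - η - μ + 2ημ`.
-/

open Finsupp

/-- The sum of the coefficients of `p` over exponents congruent to `i` mod `k`. -/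
noncomputable def classMass (k : ℕ) (p : AddMonoidAlgebra ℝ ℤ) (i : ZMod k) : ℝ :=
  (lcoeff p).sum fun m r => if (m : ZMod k) = i then r else 0

theorem sum_mul_le_of_forall_ne_le {ι : Type*} [Fintype ι] [DecidableEq ι] {f g : ι → ℝ}
    (hf : ∀ i, 0 ≤ f i) (hfs : ∑ i, f i = 1) (j : ι) {m : ℝ} (hm : ∀ i ≠ j, g i ≤ m) :
    ∑ i, f i * g i ≤ f j * g j + (1 - f j) * m := by
  rw [← Finset.add_sum_erase _ _ (Finset.mem_univ j), ← hfs,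
    ← Finset.add_sum_erase _ _ (Finset.mem_univ j), add_sub_cancel_left, Finset.sum_mul]
  gcongr with i hi
  exacts [hf i, hm i (Finset.ne_of_mem_erase hi)]

theorem sum_mul_le_of_sum_eq_one_of_le {ι : Type*} [Fintype ι] {f g : ι → ℝ}
    (hf : ∀ i, 0 ≤ f i) (hg : ∀ i, 0 ≤ g i) (hfs : ∑ i, f i = 1) (hgs : ∑ i, g i = 1)
    {η μ : ℝ} (hη : 1 / 2 ≤ η) (hη1 : η ≤ 1) (hfη : ∀ i, f i ≤ η) (hgμ : ∀ i, g i ≤ μ) :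
    ∑ i, f i * g i ≤ 1 - η - μ + 2 * η * μ := by
  classical
  obtain ⟨j, -, hj⟩ := Finset.exists_max_image Finset.univ g
    (Finset.nonempty_of_sum_ne_zero (hfs ▸ one_ne_zero))
  set m := min (g j) (1 - g j)
  have hm : ∀ i ≠ j, g i ≤ m := fun i hij =>
    le_min (hj i (Finset.mem_univ i)) <| le_sub_iff_add_le.mpr <| hgs ▸
      Finset.add_le_sum (fun i _ => hg i) (Finset.mem_univ i) (Finset.mem_univ j) hij
  calc ∑ i, f i * g i ≤ f j * (g j - m) + m := by
        linarith [sum_mul_le_of_forall_ne_le hf hfs j hm]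
    _ ≤ η * (g j - m) + m := by
        gcongr
        exacts [sub_nonneg.mpr (min_le_left _ _), hfη j]
    _ ≤ η * g j + (1 - η) * (1 - g j) := by
        nlinarith [mul_le_mul_of_nonneg_left (min_le_right (g j) (1 - g j)) (sub_nonneg.mpr hη1)]
    _ ≤ 1 - η - μ + 2 * η * μ := by
        nlinarith [mul_le_mul_of_nonneg_left (hgμ j) (by linarith : (0:ℝ) ≤ 2 * η - 1)]

theorem classMass_eq_coeff_mapDomain (k : ℕ) (p : AddMonoidAlgebra ℝ ℤ) (i : ZMod k) :
    classMass k p i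
      = (AddMonoidAlgebra.mapDomainRingHom ℝ (Int.castAddHom (ZMod k)) p).coeff i := by
  rw [AddMonoidAlgebra.mapDomainRingHom_apply, AddMonoidAlgebra.coeff_mapDomain,
    Finsupp.mapDomain, Finsupp.sum_apply]
  exact Finsupp.sum_congr fun m _ => by rw [Finsupp.single_apply, Int.coe_castAddHom]

theorem classMass_mul (k : ℕ) [NeZero k] (a a' : AddMonoidAlgebra ℝ ℤ) (j : ZMod k) :
    classMass k (a * a') j = ∑ i, classMass k a i * classMass k a' (j - i) := by
  simp only [classMass_eq_coeff_mapDomain, map_mul, AddMonoidAlgebra.coeff_mul_apply_left,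
    neg_add_eq_sub]
  exact Finsupp.sum_fintype _ _ fun _ => zero_mul _

theorem classMass_nonneg {p : AddMonoidAlgebra ℝ ℤ} (hp : ∀ m, 0 ≤ lcoeff p m) (k : ℕ)
    (i : ZMod k) : 0 ≤ classMass k p i :=
  Finset.sum_nonneg fun m _ => by dsimp only; split_ifs <;> simp [hp m]

theorem sum_classMass (k : ℕ) [NeZero k] (p : AddMonoidAlgebra ℝ ℤ) :
    ∑ i, classMass k p i = ev1 p := by
  unfold classMass ev1 Finsupp.sum
  rw [Finset.sum_comm]
  simp

theorem ev1_eq_lift (p : AddMonoidAlgebra ℝ ℤ) : ev1 p = AddMonoidAlgebra.lift ℝ ℝ ℤ 1 p := by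
  simp [ev1, lcoeff, AddMonoidAlgebra.lift_apply]

theorem ev1_mul (p q : AddMonoidAlgebra ℝ ℤ) : ev1 (p * q) = ev1 p * ev1 q := by
  simp only [ev1_eq_lift, map_mul]

theorem sum_coeff_not_dvd (k : ℕ) (p : AddMonoidAlgebra ℝ ℤ) :
    ((lcoeff p).sum fun m r => if (k : ℤ) ∣ m then 0 else r) = ev1 p - classMass k p 0 := by
  unfold ev1 classMass
  rw [← Finsupp.sum_sub]
  refine Finsupp.sum_congr fun m _ => ?_
  simp only [ZMod.intCast_zmod_eq_zero_iff_dvd]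
  split_ifs <;> ring

open scoped Classical in
theorem mass_off_B_lower_bound_general (k : ℕ) (hk : 1 ≤ k)
    (a a' : AddMonoidAlgebra ℝ ℤ)
    (ha : ∀ m, 0 ≤ lcoeff a m) (ha' : ∀ m, 0 ≤ lcoeff a' m)
    (h1 : ev1 a = 1) (h1' : ev1 a' = 1)
    (η μ : ℝ) (hη : 1 / 2 ≤ η) (hη1 : η ≤ 1)
    (hA : ∀ i : ZMod k, classMass k a i ≤ η)
    (hA' : ∀ i : ZMod k, classMass k a' i ≤ μ) :
    η + μ - 2 * η * μ ≤
      (lcoeff (a * a')).sum fun m r => if (k : ℤ) ∣ m then 0 else r := by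
  have : NeZero k := ⟨by omega⟩
  have hX : ∑ i, classMass k a i = 1 := (sum_classMass k a).trans h1
  have hY : ∑ i, classMass k a' (0 - i) = 1 :=
    ((Equiv.subLeft 0).sum_comp (classMass k a')).trans ((sum_classMass k a').trans h1')
  have hmass := sum_mul_le_of_sum_eq_one_of_le (classMass_nonneg ha k)
    (fun i => classMass_nonneg ha' k _) hX hY hη hη1 hA (fun i => hA' _)
  rw [sum_coeff_not_dvd, ev1_mul, h1, h1', classMass_mul]
  linarith

open scoped Classical in
/-- Lemma 7.3: if `a`, `a'` have nonnegative coefficients with total mass `1`, and each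
residue class mod `k` carries at most `η` (resp. `μ`) of the mass of `a` (resp. `a'`),
with `1/2 ≤ η, μ ≤ 1`, then the mass of `a·a'` on exponents not divisible by `k` is at
least `η + μ − 2ημ`. -/
theorem mass_off_B_lower_bound (k : ℕ) (hk : 1 ≤ k)
    (a a' : AddMonoidAlgebra ℝ ℤ)
    (ha : ∀ m, 0 ≤ lcoeff a m) (ha' : ∀ m, 0 ≤ lcoeff a' m)
    (h1 : ev1 a = 1) (h1' : ev1 a' = 1)
    (η μ : ℝ) (hη : 1 / 2 ≤ η) (hη1 : η ≤ 1) (hμ : 1 / 2 ≤ μ) (hμ1 : μ ≤ 1)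
    (hA : ∀ i : ZMod k, classMass k a i ≤ η)
    (hA' : ∀ i : ZMod k, classMass k a' i ≤ μ) :
    η + μ - 2 * η * μ ≤
      (lcoeff (a * a')).sum fun m r => if (k : ℤ) ∣ m then 0 else r :=
  mass_off_B_lower_bound_general k hk a a' ha ha' h1 h1' η μ hη hη1 hA hA'
end

section
/- Let k ≥ 1 be an integer, let a, a' be Laurent polynomials in ℝ[x,x⁻¹] with nonnegative coefficients, and let δ ≥ 0. For i ∈ ℤ/kℤ let A_i denote the sum of the coefficients of a over exponents n ∈ ℤ with n ≡ i (mod k). Suppose there exist distinct i, j ∈ ℤ/kℤ with A_i ≥ δ·a(1) and A_j ≥ δ·a(1). Then the sum of the coefficients of a·a' over exponents not divisible by k is at least δ·a(1)·a'(1). -/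
open Finsupp

/-!
Reduce the exponents mod `k`. The mass of `a·a'` off `k ℤ` is
`∑ₙ a'ₙ · (mass of a on {m | m + n ≢ 0})`. For each `n` one of the two heavy classes `i`, `j`
avoids `-n`, since `i + n ≡ 0 ≡ j + n` would force `i = j`; so each inner mass is at least
`δ·a(1)`, and summing against `a'` gives `δ·a(1)·a'(1)`.
-/

namespace Finsupp

variable {G R : Type*}

noncomputable def mass [AddCommMonoid R] (p : G →₀ R) (P : G → Prop) [DecidablePred P] : R :=
  p.sum fun g r => if P g then r else 0

theorem mass_mono [AddCommMonoid R] [PartialOrder R] [IsOrderedAddMonoid R] {p : G →₀ R}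
    (hp : ∀ g, 0 ≤ p g) {P Q : G → Prop} [DecidablePred P] [DecidablePred Q]
    (hPQ : ∀ g, P g → Q g) : p.mass P ≤ p.mass Q :=
  Finsupp.sum_le_sum fun g _ => by
    by_cases hg : P g
    · simp [hg, hPQ g hg]
    · simpa [hg] using ite_nonneg (hp g) le_rfl

theorem le_mass_add_ne_zero_of_two_fibers {H : Type*} [AddCommMonoid R] [PartialOrder R]
    [IsOrderedAddMonoid R] [AddZeroClass H] [IsRightCancelAdd H] [DecidableEq H]
    {p : G →₀ R} (hp : ∀ g, 0 ≤ p g) (f : G → H) {c : R} {i j : H} (hij : i ≠ j)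
    (hi : c ≤ p.mass (f · = i)) (hj : c ≤ p.mass (f · = j)) (h : H) :
    c ≤ p.mass (fun g => f g + h ≠ 0) := by
  obtain ⟨t, ht, htc⟩ : ∃ t, t + h ≠ 0 ∧ c ≤ p.mass (f · = t) := by
    by_cases hih : i + h = 0
    · exact ⟨j, fun hjh => hij (add_right_cancel (hih.trans hjh.symm)), hj⟩
    · exact ⟨i, hih, hi⟩
  exact htc.trans (mass_mono hp fun g hg => hg ▸ ht)

end Finsupp

namespace AddMonoidAlgebra

variable {G R : Type*}

theorem sum_coeff_mul {N : Type*} [Semiring R] [Add G] [AddCommMonoid N]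
    (x y : AddMonoidAlgebra R G) {F : G → R → N} (F_zero : ∀ g, F g 0 = 0)
    (F_add : ∀ g r s, F g (r + s) = F g r + F g s) :
    (x * y).coeff.sum F =
      x.coeff.sum fun g₁ r₁ => y.coeff.sum fun g₂ r₂ => F (g₁ + g₂) (r₁ * r₂) := by
  simp only [mul_def, coeff_finsuppSum, coeff_single]
  rw [Finsupp.sum_sum_index F_zero F_add]
  refine Finsupp.sum_congr fun g₁ _ => ?_
  rw [Finsupp.sum_sum_index F_zero F_add]
  exact Finsupp.sum_congr fun g₂ _ => Finsupp.sum_single_index (F_zero _)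

theorem mass_coeff_mul [CommSemiring R] [Add G] (x y : AddMonoidAlgebra R G) (P : G → Prop)
    [DecidablePred P] :
    (x * y).coeff.mass P = y.coeff.sum fun g₂ r₂ => x.coeff.mass (fun g₁ => P (g₁ + g₂)) * r₂ := by
  rw [mass, sum_coeff_mul x y (fun _ => by simp) (fun _ _ _ => by split_ifs <;> simp),
    Finsupp.sum_comm]
  refine Finsupp.sum_congr fun g₂ _ => ?_
  rw [mass, Finsupp.sum_mul]
  exact Finsupp.sum_congr fun g₁ _ => by split_ifs <;> simp

theorem le_mass_coeff_mul_of_two_fibers {H : Type*} [CommSemiring R] [PartialOrder R]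
    [IsOrderedRing R] [Add G] [AddZeroClass H] [IsRightCancelAdd H] [DecidableEq H]
    (f : G →ₙ+ H) {x y : AddMonoidAlgebra R G} (hx : ∀ g, 0 ≤ x.coeff g)
    (hy : ∀ g, 0 ≤ y.coeff g) {c : R} {i j : H} (hij : i ≠ j)
    (hi : c ≤ x.coeff.mass (f · = i)) (hj : c ≤ x.coeff.mass (f · = j)) :
    c * (y.coeff.sum fun _ r => r) ≤ (x * y).coeff.mass (f · ≠ 0) := by
  rw [mass_coeff_mul, Finsupp.mul_sum]
  refine Finsupp.sum_le_sum fun g₂ _ => mul_le_mul_of_nonneg_right ?_ (hy g₂)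
  simpa only [map_add] using le_mass_add_ne_zero_of_two_fibers hx f hij hi hj (f g₂)

end AddMonoidAlgebra

open scoped Classical in
theorem two_classes_mass_off_B_general (k : ℕ)
    (a a' : AddMonoidAlgebra ℝ ℤ)
    (ha : ∀ m, 0 ≤ lcoeff a m) (ha' : ∀ m, 0 ≤ lcoeff a' m)
    (δ : ℝ)
    (i j : ZMod k) (hij : i ≠ j)
    (hi : δ * ev1 a ≤ classMass k a i)
    (hj : δ * ev1 a ≤ classMass k a j) :
    δ * ev1 a * ev1 a' ≤
      (lcoeff (a * a')).sum fun m r => if (k : ℤ) ∣ m then 0 else r := by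
  have key := AddMonoidAlgebra.le_mass_coeff_mul_of_two_fibers
    (Int.castAddHom (ZMod k)).toAddHom ha ha' hij hi hj
  refine key.trans_eq (Finsupp.sum_congr fun m _ => ?_)
  simp [ZMod.intCast_zmod_eq_zero_iff_dvd, ite_not]

open scoped Classical in
/-- Lemma 7.4: if two distinct residue classes mod `k` each carry at least a `δ`-fraction
of the mass of `a`, then the mass of `a·a'` on exponents not divisible by `k` is at
least `δ·a(1)·a'(1)`. -/
theorem two_classes_mass_off_B (k : ℕ) (hk : 1 ≤ k)
    (a a' : AddMonoidAlgebra ℝ ℤ)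
    (ha : ∀ m, 0 ≤ lcoeff a m) (ha' : ∀ m, 0 ≤ lcoeff a' m)
    (δ : ℝ) (hδ : 0 ≤ δ)
    (i j : ZMod k) (hij : i ≠ j)
    (hi : δ * ev1 a ≤ classMass k a i)
    (hj : δ * ev1 a ≤ classMass k a j) :
    δ * ev1 a * ev1 a' ≤
      (lcoeff (a * a')).sum fun m r => if (k : ℤ) ∣ m then 0 else r :=
  two_classes_mass_off_B_general k a a' ha ha' δ i j hij hi hj
end
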